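/- Let D ≥ 3 be an integer and assume A ∈ ℝ^{N×d} and y ∈ ℝ^N satisfy the standing assumption (non-unique case). Then the maximization problem max_{x ∈ L_min} ∑_{i=1}^d |x_i|^{2/D} has a unique maximizer g*, and this maximizer satisfies supp(g*) = S. -/
import Mathlib


open scoped BigOperators

noncomputable section

/-- The ℓ¹-norm of a vector in ℝ^d. -/
def l1 {d : ℕ} (x : Fin d → ℝ) : ℝ := ∑ i, |x i|

/-- The set of ℓ¹-minimizers among the solutions of A x = y. -/
def Lmin {N d : ℕ} (A : Matrix (Fin N) (Fin d) ℝ) (y : Fin N → ℝ) : Set (Fin d → ℝ) :=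
  { x | A.mulVec x = y ∧ ∀ z, A.mulVec z = y → l1 x ≤ l1 z }

open Classical in
/-- The generalized support S = ∪_{x ∈ L_min} supp(x). -/
def genS {N d : ℕ} (A : Matrix (Fin N) (Fin d) ℝ) (y : Fin N → ℝ) : Finset (Fin d) :=
  Finset.univ.filter (fun i => ∃ x ∈ Lmin A y, x i ≠ 0)

/-- The tangent space T = span{x - x' : x, x' ∈ L_min}. -/
def Tspace {N d : ℕ} (A : Matrix (Fin N) (Fin d) ℝ) (y : Fin N → ℝ) :
    Submodule ℝ (Fin d → ℝ) :=
  Submodule.span ℝ { v | ∃ x ∈ Lmin A y, ∃ x' ∈ Lmin A y, v = x - x' }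

/-- The set of quotients whose supremum is the generalized null space constant ρ(N). -/
def grhoSet {d : ℕ} (S : Finset (Fin d)) (σ : Fin d → ℝ) (Nset : Set (Fin d → ℝ)) :
    Set ℝ :=
  { r | ∃ n ∈ Nset, n ≠ 0 ∧ r = (-∑ i ∈ S, σ i * n i) / ∑ i ∈ Sᶜ, |n i| }

/-- The generalized null space constant ρ(N). -/
def grho {d : ℕ} (S : Finset (Fin d)) (σ : Fin d → ℝ) (Nset : Set (Fin d → ℝ)) : ℝ :=
  sSup (grhoSet S σ Nset)

/-- The set of quotients whose supremum is the generalized null space constant ρ⁻(N). -/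
def grhoMinusSet {d : ℕ} (S : Finset (Fin d)) (σ : Fin d → ℝ) (Nset : Set (Fin d → ℝ)) :
    Set ℝ :=
  { r | ∃ n ∈ Nset, n ≠ 0 ∧
      r = (∑ i ∈ S.filter (fun i => σ i * n i < 0), |n i|) / ∑ i ∈ Sᶜ, |n i| }

/-- The generalized null space constant ρ⁻(N). -/
def grhoMinus {d : ℕ} (S : Finset (Fin d)) (σ : Fin d → ℝ) (Nset : Set (Fin d → ℝ)) : ℝ :=
  sSup (grhoMinusSet S σ Nset)

/-- The set of quotients whose supremum is the generalized null space constant ρ̃(N). -/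
def grhoTildeSet {d : ℕ} (S : Finset (Fin d)) (σ : Fin d → ℝ) (Nset : Set (Fin d → ℝ)) :
    Set ℝ :=
  { r | ∃ n ∈ Nset, n ≠ 0 ∧ r = (∑ i ∈ S, |n i|) / ∑ i ∈ Sᶜ, |n i| }

/-- The generalized null space constant ρ̃(N). -/
def grhoTilde {d : ℕ} (S : Finset (Fin d)) (σ : Fin d → ℝ) (Nset : Set (Fin d → ℝ)) : ℝ :=
  sSup (grhoTildeSet S σ Nset)

/-- The support of a vector, as a finset of indices. -/
def suppF {d : ℕ} (g : Fin d → ℝ) : Finset (Fin d) :=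
  Finset.univ.filter (fun i => g i ≠ 0)

section aux

variable {N d : ℕ} {A : Matrix (Fin N) (Fin d) ℝ} {y : Fin N → ℝ}

lemma l1_nonneg (x : Fin d → ℝ) : 0 ≤ l1 x :=
  Finset.sum_nonneg fun i _ => abs_nonneg _

lemma continuous_l1 : Continuous (l1 (d := d)) :=
  continuous_finset_sum _ fun i _ => (continuous_apply i).abs

lemma continuous_mulVec (A : Matrix (Fin N) (Fin d) ℝ) :
    Continuous fun x => A.mulVec x := by
  have h : (fun x => A.mulVec x) = fun x => A.mulVecLin x := by
    funext x; simp [Matrix.mulVecLin_apply]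
  rw [h]
  exact A.mulVecLin.continuous_of_finiteDimensional

lemma isCompact_sol (A : Matrix (Fin N) (Fin d) ℝ) (y : Fin N → ℝ) (c : ℝ) :
    IsCompact {x : Fin d → ℝ | A.mulVec x = y ∧ l1 x ≤ c} := by
  apply Metric.isCompact_of_isClosed_isBounded
  · have h1 : IsClosed {x : Fin d → ℝ | A.mulVec x = y} :=
      isClosed_singleton.preimage (continuous_mulVec A)
    have h2 : IsClosed {x : Fin d → ℝ | l1 x ≤ c} :=
      isClosed_Iic.preimage continuous_l1
    exact h1.inter h2
  · rw [isBounded_iff_forall_norm_le]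
    refine ⟨max c 0, fun x hx => ?_⟩
    rw [pi_norm_le_iff_of_nonneg (le_max_right _ _)]
    intro i
    have : |x i| ≤ l1 x := Finset.single_le_sum (fun j _ => abs_nonneg (x j)) (Finset.mem_univ i)
    exact le_trans (le_trans this hx.2) (le_max_left _ _)

lemma Lmin_nonempty (hex : ∃ x, A.mulVec x = y) : (Lmin A y).Nonempty := by
  obtain ⟨x₀, hx₀⟩ := hex
  have hK : IsCompact {x : Fin d → ℝ | A.mulVec x = y ∧ l1 x ≤ l1 x₀} := isCompact_sol A y _
  obtain ⟨x, hx, hmin⟩ := hK.exists_isMinOn ⟨x₀, ⟨hx₀, le_refl _⟩⟩ continuous_l1.continuousOn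
  refine ⟨x, hx.1, fun z hz => ?_⟩
  by_cases h : l1 z ≤ l1 x₀
  · exact hmin (Set.mem_setOf.mpr ⟨hz, h⟩)
  · exact le_trans (hmin (Set.mem_setOf.mpr ⟨hx₀, le_refl _⟩)) (le_of_not_ge h)

lemma l1_eq_of_mem {x x' : Fin d → ℝ} (hx : x ∈ Lmin A y) (hx' : x' ∈ Lmin A y) :
    l1 x = l1 x' :=
  le_antisymm (hx.2 x' hx'.1) (hx'.2 x hx.1)

lemma Lmin_isCompact (hex : ∃ x, A.mulVec x = y) : IsCompact (Lmin A y) := by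
  obtain ⟨x₀, hx₀⟩ := Lmin_nonempty hex
  have : Lmin A y = {x : Fin d → ℝ | A.mulVec x = y ∧ l1 x ≤ l1 x₀} := by
    ext x
    constructor
    · exact fun hx => ⟨hx.1, hx.2 x₀ hx₀.1⟩
    · exact fun hx => ⟨hx.1, fun z hz => le_trans hx.2 (hx₀.2 z hz)⟩
  rw [this]
  exact isCompact_sol A y _

lemma abs_add_same_sign {a b : ℝ} (h : 0 ≤ a * b) : |a + b| = |a| + |b| := by
  rcases mul_nonneg_iff.mp h with ⟨ha, hb⟩ | ⟨ha, hb⟩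
  · rw [abs_of_nonneg ha, abs_of_nonneg hb, abs_of_nonneg (by linarith)]
  · rw [abs_of_nonpos ha, abs_of_nonpos hb, abs_of_nonpos (by linarith)]; ring

lemma abs_add_lt_of_neg {a b : ℝ} (h : a * b < 0) : |a + b| < |a| + |b| := by
  rcases mul_neg_iff.mp h with ⟨ha, hb⟩ | ⟨ha, hb⟩ <;>
    rcases abs_cases (a + b) with ⟨h1, _⟩ | ⟨h1, _⟩ <;>
    rcases abs_cases a with ⟨h2, _⟩ | ⟨h2, _⟩ <;>
    rcases abs_cases b with ⟨h3, _⟩ | ⟨h3, _⟩ <;> nlinarith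

lemma sign_consistent {x x' : Fin d → ℝ} (hx : x ∈ Lmin A y) (hx' : x' ∈ Lmin A y)
    (i : Fin d) : 0 ≤ x i * x' i := by
  by_contra h
  push_neg at h
  set m : Fin d → ℝ := fun j => (x j + x' j) / 2 with hm
  have hmem : A.mulVec m = y := by
    have : m = (2⁻¹ : ℝ) • (x + x') := by funext j; simp [hm, smul_eq_mul]; ring
    rw [this, Matrix.mulVec_smul, Matrix.mulVec_add, hx.1, hx'.1]
    funext j; simp; ring
  have hlt : l1 m < l1 x := by
    have hxx' : l1 x = l1 x' := l1_eq_of_mem hx hx'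
    have hle : ∀ j ∈ Finset.univ, |m j| ≤ (|x j| + |x' j|) / 2 := by
      intro j _
      have h1 := abs_add_le (x j) (x' j)
      have h2 : |m j| = |x j + x' j| / 2 := by
        simp only [hm]
        rw [abs_div, abs_two]
      linarith
    have hst : |m i| < (|x i| + |x' i|) / 2 := by
      have h1 := abs_add_lt_of_neg h
      have h2 : |m i| = |x i + x' i| / 2 := by
        simp only [hm]
        rw [abs_div, abs_two]
      linarith
    have key : ∑ j, |m j| < ∑ j, (|x j| + |x' j|) / 2 :=
      Finset.sum_lt_sum hle ⟨i, Finset.mem_univ i, hst⟩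
    have hsplit : ∑ j, (|x j| + |x' j|) / 2 = (l1 x + l1 x') / 2 := by
      unfold l1
      rw [← Finset.sum_add_distrib, Finset.sum_div]
    rw [hsplit, ← hxx'] at key
    rw [show l1 m = ∑ j, |m j| from rfl]
    linarith
  exact absurd (hx.2 m hmem) (not_le.mpr hlt)

lemma comb_mem {x x' : Fin d → ℝ} (hx : x ∈ Lmin A y) (hx' : x' ∈ Lmin A y)
    {t : ℝ} (ht0 : 0 ≤ t) (ht1 : t ≤ 1) :
    (fun i => (1 - t) * x i + t * x' i) ∈ Lmin A y ∧
      ∀ i, |(1 - t) * x i + t * x' i| = (1 - t) * |x i| + t * |x' i| := by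
  have habs : ∀ i, |(1 - t) * x i + t * x' i| = (1 - t) * |x i| + t * |x' i| := by
    intro i
    have hsign : 0 ≤ ((1 - t) * x i) * (t * x' i) := by
      have := sign_consistent hx hx' i
      have h1 : 0 ≤ (1 - t) * t := mul_nonneg (by linarith) ht0
      calc (0:ℝ) ≤ ((1 - t) * t) * (x i * x' i) := mul_nonneg h1 this
        _ = ((1 - t) * x i) * (t * x' i) := by ring
    rw [abs_add_same_sign hsign, abs_mul, abs_mul, abs_of_nonneg (by linarith : (0:ℝ) ≤ 1 - t),
      abs_of_nonneg ht0]
  have hl1 : l1 (fun i => (1 - t) * x i + t * x' i) = l1 x := by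
    unfold l1
    have : ∀ i ∈ Finset.univ, |(1 - t) * x i + t * x' i| = (1 - t) * |x i| + t * |x' i| :=
      fun i _ => habs i
    rw [Finset.sum_congr rfl this, Finset.sum_add_distrib, ← Finset.mul_sum, ← Finset.mul_sum]
    have := l1_eq_of_mem hx hx'
    unfold l1 at this
    rw [← this]; ring
  have hmv : A.mulVec (fun i => (1 - t) * x i + t * x' i) = y := by
    have heq : (fun i => (1 - t) * x i + t * x' i) = (1 - t) • x + t • x' := by
      funext j; simp [smul_eq_mul]
    rw [heq, Matrix.mulVec_add, Matrix.mulVec_smul, Matrix.mulVec_smul, hx.1, hx'.1,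
      ← add_smul, sub_add_cancel, one_smul]
  exact ⟨⟨hmv, fun z hz => hl1 ▸ hx.2 z hz⟩, habs⟩

end aux

section pcon

lemma rpow_comb_ge {p : ℝ} (hp0 : 0 < p) (hp1 : p < 1) {a b t : ℝ} (ha : 0 ≤ a) (hb : 0 ≤ b)
    (ht0 : 0 ≤ t) (ht1 : t ≤ 1) :
    (1 - t) * a ^ p + t * b ^ p ≤ ((1 - t) * a + t * b) ^ p := by
  have h := (Real.concaveOn_rpow hp0.le hp1.le).2 (Set.mem_Ici.mpr ha) (Set.mem_Ici.mpr hb)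
    (by linarith : (0:ℝ) ≤ 1 - t) ht0 (by ring)
  simpa [smul_eq_mul] using h

lemma rpow_comb_gt {p : ℝ} (hp0 : 0 < p) (hp1 : p < 1) {a b t : ℝ} (ha : 0 ≤ a) (hb : 0 ≤ b)
    (hab : a ≠ b) (ht0 : 0 < t) (ht1 : t < 1) :
    (1 - t) * a ^ p + t * b ^ p < ((1 - t) * a + t * b) ^ p := by
  have h := (Real.strictConcaveOn_rpow hp0 hp1).2 (Set.mem_Ici.mpr ha) (Set.mem_Ici.mpr hb)
    hab (by linarith : (0:ℝ) < 1 - t) ht0 (by ring)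
  simpa [smul_eq_mul] using h

end pcon

/-- the maximizer of ∑ |x_i|^{2/D} over L_min is unique and has
maximal support. -/
theorem lp_maximizer_unique_maximal_support {N d : ℕ} (D : ℕ) (hD3 : 3 ≤ D)
    (A : Matrix (Fin N) (Fin d) ℝ) (y : Fin N → ℝ)
    (hex : ∃ x : Fin d → ℝ, A.mulVec x = y)
    (hy : y ≠ 0)
    (hker : ∃ n : Fin d → ℝ, n ≠ 0 ∧ A.mulVec n = 0) :
    ∃ g : Fin d → ℝ,
      (g ∈ Lmin A y ∧ ∀ x ∈ Lmin A y,
        (∑ i, |x i| ^ ((2 : ℝ) / (D : ℝ))) ≤ ∑ i, |g i| ^ ((2 : ℝ) / (D : ℝ))) ∧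
      (∀ g' ∈ Lmin A y,
        (∀ x ∈ Lmin A y,
          (∑ i, |x i| ^ ((2 : ℝ) / (D : ℝ))) ≤ ∑ i, |g' i| ^ ((2 : ℝ) / (D : ℝ))) →
        g' = g) ∧
      suppF g = genS A y := by
  classical
  have hp0 : 0 < (2 : ℝ) / (D : ℝ) := by
    have : (0:ℝ) < D := by exact_mod_cast Nat.lt_of_lt_of_le (by norm_num) hD3
    positivity
  have hp1 : (2 : ℝ) / (D : ℝ) < 1 := by
    have h2 : (2:ℝ) < D := by exact_mod_cast Nat.lt_of_lt_of_le (by norm_num) hD3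
    rw [div_lt_one (by linarith)]
    exact h2
  set p : ℝ := (2 : ℝ) / (D : ℝ) with hpdef
  have hfc : Continuous fun x : Fin d → ℝ => ∑ i, |x i| ^ p :=
    continuous_finset_sum _ fun i _ =>
      ((continuous_apply i).abs).rpow_const (fun x => Or.inr hp0.le)
  obtain ⟨g, hg, hmax⟩ :=
    (Lmin_isCompact hex).exists_isMaxOn (Lmin_nonempty hex) hfc.continuousOn
  have hmax' : ∀ x ∈ Lmin A y, (∑ i, |x i| ^ p) ≤ ∑ i, |g i| ^ p := fun x hx => hmax hx
  have hfnn : ∀ x : Fin d → ℝ, 0 ≤ ∑ i, |x i| ^ p :=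
    fun x => Finset.sum_nonneg fun i _ => Real.rpow_nonneg (abs_nonneg _) p
  -- the maximizer has maximal support
  have hsupp : ∀ x ∈ Lmin A y, ∀ i : Fin d, x i ≠ 0 → g i ≠ 0 := by
    intro x hx i hxi hgi
    set ε : ℝ := |x i| ^ p with hεdef
    have hε : 0 < ε := Real.rpow_pos_of_pos (abs_pos.mpr hxi) p
    set M : ℝ := (∑ j, |g j| ^ p) + 1 with hMdef
    have hM : 0 < M := by have := hfnn g; positivity
    set q : ℝ := 1 - p with hqdef
    have hq : 0 < q := by simp only [hqdef]; linarith
    set t : ℝ := min (1/2) ((ε / M) ^ (1/q) / 2) with htdef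
    have hrp : 0 < (ε / M) ^ (1/q) := Real.rpow_pos_of_pos (by positivity) _
    have htpos : 0 < t := lt_min (by norm_num) (by positivity)
    have ht1 : t < 1 := lt_of_le_of_lt (min_le_left _ _) (by norm_num)
    have htq : t ^ q < ε / M := by
      have h1 : t < (ε / M) ^ (1/q) := lt_of_le_of_lt (min_le_right _ _) (by linarith)
      calc t ^ q < ((ε / M) ^ (1/q)) ^ q := Real.rpow_lt_rpow htpos.le h1 hq
        _ = ε / M := by
          rw [← Real.rpow_mul (by positivity), one_div, inv_mul_cancel₀ hq.ne', Real.rpow_one]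
    have hkey : t * (∑ j, |g j| ^ p) < t ^ p * ε := by
      have h2 : t ^ q * M < ε := (lt_div_iff₀ hM).mp htq
      have h3 : t ^ q * t ^ p = t := by
        rw [← Real.rpow_add htpos]
        norm_num [hqdef]
      have htp : 0 < t ^ p := Real.rpow_pos_of_pos htpos p
      have hfgM : (∑ j, |g j| ^ p) < M := by simp only [hMdef]; linarith
      calc t * (∑ j, |g j| ^ p) < t * M := by
            exact mul_lt_mul_of_pos_left hfgM htpos
        _ = (t ^ q * t ^ p) * M := by rw [h3]
        _ = (t ^ q * M) * t ^ p := by ring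
        _ < ε * t ^ p := by exact mul_lt_mul_of_pos_right h2 htp
        _ = t ^ p * ε := by ring
    obtain ⟨hcmem, hcabs⟩ := comb_mem hg hx htpos.le ht1.le
    have hterm : ∀ j ∈ Finset.univ,
        (1 - t) * |g j| ^ p + (if j = i then t ^ p * ε else 0)
          ≤ |(1 - t) * g j + t * x j| ^ p := by
      intro j _
      rw [hcabs j]
      by_cases hji : j = i
      · subst hji
        rw [if_pos rfl, hgi]
        simp only [abs_zero, Real.zero_rpow hp0.ne', mul_zero, zero_add]
        rw [Real.mul_rpow htpos.le (abs_nonneg _)]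
      · rw [if_neg hji, add_zero]
        have h1 : (1 - t) * |g j| ≤ (1 - t) * |g j| + t * |x j| := by
          have : 0 ≤ t * |x j| := mul_nonneg htpos.le (abs_nonneg _)
          linarith
        have h2 : ((1 - t) * |g j|) ^ p ≤ ((1 - t) * |g j| + t * |x j|) ^ p :=
          Real.rpow_le_rpow (mul_nonneg (by linarith) (abs_nonneg _)) h1 hp0.le
        have h3 : (1 - t) * |g j| ^ p ≤ ((1 - t) * |g j|) ^ p := by
          rw [Real.mul_rpow (by linarith) (abs_nonneg _)]
          have h4 : (1 - t) ^ (1:ℝ) ≤ (1 - t) ^ p :=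
            Real.rpow_le_rpow_of_exponent_ge (by linarith) (by linarith) hp1.le
          rw [Real.rpow_one] at h4
          exact mul_le_mul_of_nonneg_right h4 (Real.rpow_nonneg (abs_nonneg _) p)
        linarith
    have hsum : (1 - t) * (∑ j, |g j| ^ p) + t ^ p * ε
        ≤ ∑ j, |(1 - t) * g j + t * x j| ^ p := by
      have := Finset.sum_le_sum hterm
      rwa [Finset.sum_add_distrib, ← Finset.mul_sum,
        Finset.sum_ite_eq' Finset.univ i (fun _ => t ^ p * ε),
        if_pos (Finset.mem_univ i)] at this
    have hlt : (∑ j, |g j| ^ p) < ∑ j, |(1 - t) * g j + t * x j| ^ p := by linarith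
    exact absurd (hmax' _ hcmem) (not_le.mpr hlt)
  -- uniqueness
  have huniq : ∀ g' ∈ Lmin A y,
      (∀ x ∈ Lmin A y, (∑ i, |x i| ^ p) ≤ ∑ i, |g' i| ^ p) → g' = g := by
    intro g' hg' hmaxg'
    by_contra hnegg
    obtain ⟨i, hi⟩ : ∃ i, g' i ≠ g i := Function.ne_iff.mp hnegg
    have habs : |g' i| ≠ |g i| := by
      intro hEq
      rcases abs_eq_abs.mp hEq with h | h
      · exact hi h
      · have hs := sign_consistent hg' hg i
        have hz : g' i = 0 := by nlinarith
        apply hi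
        rw [hz] at h ⊢
        linarith
    obtain ⟨hcmem, hcabs⟩ := comb_mem hg' hg (t := 1/2) (by norm_num) (by norm_num)
    have heq : (∑ i, |g' i| ^ p) = ∑ i, |g i| ^ p :=
      le_antisymm (hmax' g' hg') (hmaxg' g hg)
    have hterm : ∀ j ∈ Finset.univ,
        (1 - 1/2) * |g' j| ^ p + (1/2) * |g j| ^ p
          ≤ |(1 - 1/2) * g' j + (1/2) * g j| ^ p := by
      intro j _
      rw [hcabs j]
      exact rpow_comb_ge hp0 hp1 (abs_nonneg _) (abs_nonneg _) (by norm_num) (by norm_num)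
    have hstrict : (1 - 1/2) * |g' i| ^ p + (1/2) * |g i| ^ p
        < |(1 - 1/2) * g' i + (1/2) * g i| ^ p := by
      rw [hcabs i]
      exact rpow_comb_gt hp0 hp1 (abs_nonneg _) (abs_nonneg _) habs (by norm_num) (by norm_num)
    have hsum : ∑ j, ((1 - 1/2) * |g' j| ^ p + (1/2) * |g j| ^ p)
        < ∑ j, |(1 - 1/2) * g' j + (1/2) * g j| ^ p :=
      Finset.sum_lt_sum hterm ⟨i, Finset.mem_univ i, hstrict⟩
    have hL : ∑ j, ((1 - 1/2) * |g' j| ^ p + (1/2) * |g j| ^ p) = ∑ j, |g j| ^ p := by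
      rw [Finset.sum_add_distrib, ← Finset.mul_sum, ← Finset.mul_sum, heq]
      ring
    rw [hL] at hsum
    exact absurd (hmax' _ hcmem) (not_le.mpr hsum)
  refine ⟨g, ⟨hg, hmax'⟩, huniq, ?_⟩
  ext i
  simp only [suppF, genS, Finset.mem_filter, Finset.mem_univ, true_and]
  constructor
  · exact fun h => ⟨g, hg, h⟩
  · rintro ⟨x, hx, hxi⟩
    exact hsupp x hx i hxi
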